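/- For real random variables P_1,...,P_m with order statistics P_{(1)} ≤ ... ≤ P_{(m)}, constants c_1 ≤ ... ≤ c_m, an index i and 2 ≤ r ≤ m: the event {Q_{(1)} ≤ c_1, ..., Q_{(r-1)} ≤ c_{r-1}, P_i ≤ c_{r-1}} is contained in the event {P_{(1)} ≤ c_1, ..., P_{(r)} ≤ c_r, P_i ≤ c_{r-1}}, where Q_{(k)} are the order statistics of {P_j : j ≠ i}. -/

import Mathlib

/-- Order statistics: `orderStat p k` is the (k+1)-st smallest of the values `p`. -/
noncomputable def orderStat {n : ℕ} (p : Fin n → ℝ) : Fin n → ℝ :=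
  fun k => p (Tuple.sort p k)

/-!
The k-th smallest value is at most `a` exactly when at least k of the values are at most `a`.
Deleting `P_i` lowers each such count by at most one, and by exactly one when `P_i ≤ a`.
Hence `P_(k) ≤ Q_(k) ≤ c_k` for `k ≤ r - 1`, while `Q_(r-1) ≤ c_{r-1}` and `P_i ≤ c_{r-1}`
give `P_(r) ≤ c_{r-1} ≤ c_r`.
-/

open Finset

theorem Fin.card_filter_univ_succAbove {n : ℕ} (P : Fin (n + 1) → Prop) [DecidablePred P]
    (i : Fin (n + 1)) :
    #{j | P j} = (if P i then 1 else 0) + #{k | P (i.succAbove k)} := by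
  simp only [card_filter]
  exact Fin.sum_univ_succAbove _ i

theorem orderStat_le_iff_lt_card {n : ℕ} (p : Fin n → ℝ) (k : Fin n) (a : ℝ) :
    orderStat p k ≤ a ↔ (k : ℕ) < #{j | p j ≤ a} := by
  have hcard : #{j | (p ∘ Tuple.sort p) j ≤ a} = #{j | p j ≤ a} :=
    card_equiv (Tuple.sort p) (by simp)
  rw [← hcard]
  exact (Tuple.lt_card_le_iff_apply_le_of_monotone (Tuple.monotone_sort p)).symm

theorem orderStat_castSucc_le_orderStat_comp_succAbove {n : ℕ} (p : Fin (n + 1) → ℝ)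
    (i : Fin (n + 1)) (k : Fin n) :
    orderStat p k.castSucc ≤ orderStat (p ∘ i.succAbove) k := by
  rw [orderStat_le_iff_lt_card, Fin.card_filter_univ_succAbove _ i]
  have hk := (orderStat_le_iff_lt_card (p ∘ i.succAbove) k _).mp le_rfl
  rw [Fin.val_castSucc]
  split_ifs <;> exact hk.trans_le (by simp)

theorem orderStat_succ_le_of_orderStat_comp_succAbove_le {n : ℕ} (p : Fin (n + 1) → ℝ)
    (i : Fin (n + 1)) (k : Fin n) {a : ℝ} (hpi : p i ≤ a)
    (hq : orderStat (p ∘ i.succAbove) k ≤ a) :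
    orderStat p k.succ ≤ a := by
  rw [orderStat_le_iff_lt_card] at hq ⊢
  rw [Fin.card_filter_univ_succAbove _ i, if_pos hpi, Fin.val_succ, add_comm]
  exact Nat.add_lt_add_left hq 1

/-- Inclusion (3.4), pointwise: for constants c_1 ≤ … ≤ c_m and 2 ≤ r ≤ m
(here m = n+1), the event {Q_{(1)} ≤ c_1, …, Q_{(r-1)} ≤ c_{r-1}, P_i ≤ c_{r-1}}
is contained in {P_{(1)} ≤ c_1, …, P_{(r)} ≤ c_r, P_i ≤ c_{r-1}}, where Q are the
order statistics of the m−1 values excluding P_i. -/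
theorem stmt_8 (n : ℕ) (p : Fin (n + 1) → ℝ) (i : Fin (n + 1)) (c : ℕ → ℝ)
    (hmono : ∀ a b : ℕ, 1 ≤ a → a ≤ b → b ≤ n + 1 → c a ≤ c b)
    (r : ℕ) (hr2 : 2 ≤ r) (hrm : r ≤ n + 1)
    (h : (∀ k : Fin n, (k : ℕ) + 1 ≤ r - 1 →
            orderStat (p ∘ i.succAbove) k ≤ c ((k : ℕ) + 1)) ∧
          p i ≤ c (r - 1)) :
    (∀ k : Fin (n + 1), (k : ℕ) + 1 ≤ r → orderStat p k ≤ c ((k : ℕ) + 1)) ∧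
      p i ≤ c (r - 1) := by
  obtain ⟨hq, hpi⟩ := h
  refine ⟨fun k hk => ?_, hpi⟩
  rcases Nat.lt_or_eq_of_le hk with hk | hk
  · obtain ⟨k', rfl⟩ : ∃ k' : Fin n, k'.castSucc = k :=
      Fin.exists_castSucc_eq.mpr fun hlast => by rw [hlast, Fin.val_last] at hk; omega
    rw [Fin.val_castSucc] at hk ⊢
    exact (orderStat_castSucc_le_orderStat_comp_succAbove p i k').trans (hq k' (by omega))
  · obtain ⟨k', rfl⟩ : ∃ k' : Fin n, k'.succ = k :=
      Fin.exists_succ_eq.mpr fun hzero => by rw [hzero, Fin.val_zero] at hk; omega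
    rw [Fin.val_succ] at hk ⊢
    have hk' : (k' : ℕ) + 1 = r - 1 := by omega
    calc orderStat p k'.succ ≤ c (r - 1) :=
          orderStat_succ_le_of_orderStat_comp_succAbove_le p i k' hpi (hk' ▸ hq k' hk'.le)
      _ ≤ c ((k' : ℕ) + 1 + 1) := hmono _ _ (by omega) (by omega) (by omega)
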